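/- The number of dominating sets of the grid graph is supermultiplicative in each dimension: for all positive integers m, n₁, n₂, G_{m×(n₁+n₂)}(1) ≥ G_{m×n₁}(1) · G_{m×n₂}(1), and for all positive integers m₁, m₂, n, G_{(m₁+m₂)×n}(1) ≥ G_{m₁×n}(1) · G_{m₂×n}(1). -/

import Mathlib

open scoped Classical

/-- `S` is a dominating set of `G`: every vertex is in `S` or adjacent to a vertex of `S`. -/
def IsDominating {V : Type*} (G : SimpleGraph V) (S : Finset V) : Prop :=
  ∀ v : V, v ∈ S ∨ ∃ u ∈ S, G.Adj u v

/-- The m×n grid graph `P_m □ P_n`. -/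
def gridGraph (m n : ℕ) : SimpleGraph (Fin m × Fin n) :=
  (SimpleGraph.pathGraph m).boxProd (SimpleGraph.pathGraph n)

/-- `G_{m×n}(1)`: the total number of dominating sets of the m×n grid graph. -/
noncomputable def numDomGrid (m n : ℕ) : ℕ :=
  (Finset.univ.filter
    (fun S : Finset (Fin m × Fin n) => IsDominating (gridGraph m n) S)).card

/-
Cutting the edges between columns `n₁ - 1` and `n₁` of the `m × (n₁ + n₂)` grid leaves the
disjoint union of an `m × n₁` and an `m × n₂` grid. Dominating sets of the disjoint union are
exactly the pairs of dominating sets of the two pieces, and a dominating set stays dominating when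
edges are added back. Transposing the grid gives the other dimension.
-/

namespace SimpleGraph

variable {α α' β β' : Type*} {G : SimpleGraph α} {G' : SimpleGraph α'}
  {H : SimpleGraph β} {H' : SimpleGraph β'}

def Hom.boxProdMap (f : G →g G') (g : H →g H') : G.boxProd H →g G'.boxProd H' where
  toFun := Prod.map f g
  map_rel' := by
    rintro ⟨a₁, b₁⟩ ⟨a₂, b₂⟩ h
    rcases boxProd_adj.1 h with ⟨ha, rfl⟩ | ⟨hb, rfl⟩
    · exact boxProd_adj.2 (Or.inl ⟨f.map_rel ha, rfl⟩)
    · exact boxProd_adj.2 (Or.inr ⟨g.map_rel hb, rfl⟩)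

def pathGraphSumHom (n₁ n₂ : ℕ) : pathGraph n₁ ⊕g pathGraph n₂ →g pathGraph (n₁ + n₂) where
  toFun := finSumFinEquiv
  map_rel' := by
    rintro (a | a) (b | b) h <;> simp [pathGraph_adj] at h ⊢ <;> omega

end SimpleGraph

open SimpleGraph

section Domination

variable {V W : Type*} {G : SimpleGraph V} {H : SimpleGraph W}

theorem IsDominating.image_of_surjective [DecidableEq W] {S : Finset V} (hS : IsDominating G S)
    (f : G →g H) (hf : Function.Surjective f) : IsDominating H (S.image f) := by
  intro w
  obtain ⟨v, rfl⟩ := hf w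
  rcases hS v with hv | ⟨u, hu, huv⟩
  · exact Or.inl (Finset.mem_image_of_mem f hv)
  · exact Or.inr ⟨f u, Finset.mem_image_of_mem f hu, f.map_rel huv⟩

theorem isDominating_sum_iff {U : Finset (V ⊕ W)} :
    IsDominating (G ⊕g H) U ↔ IsDominating G U.toLeft ∧ IsDominating H U.toRight := by
  constructor
  · intro hU
    refine ⟨fun v => ?_, fun w => ?_⟩
    · rcases hU (.inl v) with hv | ⟨(u | u), hu, huv⟩
      · exact Or.inl (Finset.mem_toLeft.2 hv)
      · exact Or.inr ⟨u, Finset.mem_toLeft.2 hu, huv⟩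
      · simp at huv
    · rcases hU (.inr w) with hw | ⟨(u | u), hu, huw⟩
      · exact Or.inl (Finset.mem_toRight.2 hw)
      · simp at huw
      · exact Or.inr ⟨u, Finset.mem_toRight.2 hu, huw⟩
  · rintro ⟨hG, hH⟩ (v | w)
    · rcases hG v with hv | ⟨u, hu, huv⟩
      · exact Or.inl (Finset.mem_toLeft.1 hv)
      · exact Or.inr ⟨.inl u, Finset.mem_toLeft.1 hu, huv⟩
    · rcases hH w with hw | ⟨u, hu, huw⟩
      · exact Or.inl (Finset.mem_toRight.1 hw)
      · exact Or.inr ⟨.inr u, Finset.mem_toRight.1 hu, huw⟩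

variable [Fintype V] [Fintype W]

noncomputable def numDominatingSets (G : SimpleGraph V) : ℕ :=
  (Finset.univ.filter (IsDominating G)).card

theorem numDominatingSets_le_of_bijective (f : G →g H) (hf : Function.Bijective f) :
    numDominatingSets G ≤ numDominatingSets H := by
  refine Finset.card_le_card_of_injOn (Finset.image f) (fun S hS => ?_)
    (Finset.image_injective hf.1).injOn
  simp only [Finset.coe_filter, Finset.mem_univ, true_and, Set.mem_ofPred_eq] at hS ⊢
  exact hS.image_of_surjective f hf.2

theorem SimpleGraph.Iso.numDominatingSets_eq (e : G ≃g H) :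
    numDominatingSets G = numDominatingSets H :=
  (numDominatingSets_le_of_bijective e.toHom e.bijective).antisymm
    (numDominatingSets_le_of_bijective e.symm.toHom e.symm.bijective)

theorem numDominatingSets_sum :
    numDominatingSets (G ⊕g H) = numDominatingSets G * numDominatingSets H := by
  rw [numDominatingSets, numDominatingSets, numDominatingSets, ← Finset.card_product,
    ← Finset.filter_product, Finset.univ_product_univ]
  exact Finset.card_equiv Finset.sumEquiv.toEquiv fun U => by simp [isDominating_sum_iff]

end Domination

theorem numDomGrid_eq_numDominatingSets (m n : ℕ) :
    numDomGrid m n = numDominatingSets (gridGraph m n) :=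
  rfl

theorem numDomGrid_mul_le_add (m n₁ n₂ : ℕ) :
    numDomGrid m n₁ * numDomGrid m n₂ ≤ numDomGrid m (n₁ + n₂) := by
  let f := (Hom.boxProdMap (Hom.id (G := pathGraph m)) (pathGraphSumHom n₁ n₂)).comp
    (Iso.boxProdSumDistrib (pathGraph m) (pathGraph n₁) (pathGraph n₂)).symm.toHom
  have hf : Function.Bijective f :=
    (Function.Bijective.prodMap Function.bijective_id finSumFinEquiv.bijective).comp
      (Iso.boxProdSumDistrib (pathGraph m) (pathGraph n₁) (pathGraph n₂)).symm.bijective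
  simp only [numDomGrid_eq_numDominatingSets, ← numDominatingSets_sum]
  exact numDominatingSets_le_of_bijective f hf

theorem numDomGrid_comm (m n : ℕ) : numDomGrid m n = numDomGrid n m :=
  (boxProdComm (pathGraph m) (pathGraph n)).numDominatingSets_eq

theorem numDomGrid_supermultiplicative :
    (∀ m n₁ n₂ : ℕ, 0 < m → 0 < n₁ → 0 < n₂ →
      numDomGrid m n₁ * numDomGrid m n₂ ≤ numDomGrid m (n₁ + n₂)) ∧
    (∀ m₁ m₂ n : ℕ, 0 < m₁ → 0 < m₂ → 0 < n →
      numDomGrid m₁ n * numDomGrid m₂ n ≤ numDomGrid (m₁ + m₂) n) := by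
  refine ⟨fun m n₁ n₂ _ _ _ => numDomGrid_mul_le_add m n₁ n₂, fun m₁ m₂ n _ _ _ => ?_⟩
  rw [numDomGrid_comm m₁, numDomGrid_comm m₂, numDomGrid_comm (m₁ + m₂)]
  exact numDomGrid_mul_le_add n m₁ m₂
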